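/- arXiv:1310.5993 — 4 statements merged into one kernel-verified Lean document; each statement's English description precedes it below -/
import Mathlib

section
/- Let H be a complex Hilbert space and D a self-adjoint, densely defined (possibly unbounded) operator on H. Suppose (a_n) is a sequence of bounded operators on H such that each a_n has bounded commutator with D (with continuous extension T_n := [D, a_n]), a_n → a in operator norm for some bounded operator a, and T_n → T in operator norm for some bounded operator T. Then a·dom(D) ⊆ dom(D) and D(aξ) − a(Dξ) = Tξ for every ξ ∈ dom(D); in particular the derivation a ↦ [D, a], defined on the bounded operators having bounded commutator with D, is closed (hence closable). -/
/-!
A self-adjoint operator is closed. Along the graph of `D`, the points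
`(aₙ ξ, D (aₙ ξ)) = (aₙ ξ, Tₙ ξ + aₙ (D ξ))` converge to `(a ξ, T ξ + a (D ξ))`, so by closedness
this limit lies in the graph, i.e. `a ξ ∈ dom D` and `D (a ξ) = T ξ + a (D ξ)`.
-/

open Filter Topology

namespace LinearPMap

variable {R E F : Type*} [CommRing R] [AddCommGroup E] [Module R E] [AddCommGroup F] [Module R F]
  [TopologicalSpace E] [TopologicalSpace F]

theorem IsClosed.exists_apply_eq_of_tendsto {f : E →ₗ.[R] F} (hf : f.IsClosed)
    {ι : Type*} {l : Filter ι} [l.NeBot] {x : ι → f.domain} {x₀ : E} {y₀ : F}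
    (hx : Tendsto (fun i ↦ (x i : E)) l (𝓝 x₀)) (hfx : Tendsto (fun i ↦ f (x i)) l (𝓝 y₀)) :
    ∃ h : x₀ ∈ f.domain, f ⟨x₀, h⟩ = y₀ := by
  have hmem : (x₀, y₀) ∈ f.graph :=
    hf.mem_of_tendsto (hx.prodMk_nhds hfx) (Eventually.of_forall fun i ↦ f.mem_graph (x i))
  have hx₀ := mem_domain_of_mem_graph hmem
  exact ⟨hx₀, ((image_iff hx₀).mpr hmem).symm⟩

theorem IsClosed.exists_commutator_eq_of_tendsto [ContinuousAdd E] {D : E →ₗ.[R] E}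
    (hD : D.IsClosed) {ι : Type*} {l : Filter ι} [l.NeBot] {a T : ι → E → E} {a₀ T₀ : E → E}
    (hmap : ∀ i, ∀ ξ ∈ D.domain, a i ξ ∈ D.domain)
    (hcomm : ∀ i ξ (hξ : ξ ∈ D.domain), D ⟨a i ξ, hmap i ξ hξ⟩ - a i (D ⟨ξ, hξ⟩) = T i ξ)
    (ha : ∀ ξ, Tendsto (fun i ↦ a i ξ) l (𝓝 (a₀ ξ)))
    (hT : ∀ ξ, Tendsto (fun i ↦ T i ξ) l (𝓝 (T₀ ξ))) (ξ : E) (hξ : ξ ∈ D.domain) :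
    ∃ h : a₀ ξ ∈ D.domain, D ⟨a₀ ξ, h⟩ - a₀ (D ⟨ξ, hξ⟩) = T₀ ξ := by
  have hDa : Tendsto (fun i ↦ D ⟨a i ξ, hmap i ξ hξ⟩) l (𝓝 (T₀ ξ + a₀ (D ⟨ξ, hξ⟩))) := by
    refine ((hT ξ).add (ha (D ⟨ξ, hξ⟩))).congr fun i ↦ ?_
    rw [← hcomm i ξ hξ, sub_add_cancel]
  obtain ⟨h, hDa₀⟩ := hD.exists_apply_eq_of_tendsto (x := fun i ↦ ⟨a i ξ, hmap i ξ hξ⟩) (ha ξ) hDa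
  exact ⟨h, by rw [hDa₀, add_sub_cancel_right]⟩

end LinearPMap

theorem closedness_of_commutator_derivation_general
    {H : Type*} [NormedAddCommGroup H] [InnerProductSpace ℂ H] [CompleteSpace H]
    (D : H →ₗ.[ℂ] H) (hsa : IsSelfAdjoint D)
    (aseq Tseq : ℕ → H →L[ℂ] H) (a T : H →L[ℂ] H)
    (hmap : ∀ n, ∀ ξ ∈ D.domain, aseq n ξ ∈ D.domain)
    (hcomm : ∀ n, ∀ ξ, ∀ hξ : ξ ∈ D.domain,
      D ⟨aseq n ξ, hmap n ξ hξ⟩ - aseq n (D ⟨ξ, hξ⟩) = Tseq n ξ)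
    (ha : Tendsto aseq atTop (𝓝 a))
    (hT : Tendsto Tseq atTop (𝓝 T)) :
    ∀ ξ, ∀ hξ : ξ ∈ D.domain, ∃ hξ' : a ξ ∈ D.domain,
      D ⟨a ξ, hξ'⟩ - a (D ⟨ξ, hξ⟩) = T ξ :=
  hsa.isClosed.exists_commutator_eq_of_tendsto hmap hcomm
    (fun ξ ↦ ((ContinuousLinearMap.apply ℂ H ξ).continuous.tendsto a).comp ha)
    (fun ξ ↦ ((ContinuousLinearMap.apply ℂ H ξ).continuous.tendsto T).comp hT)

/-- Let `H` be a complex Hilbert space and `D` a self-adjoint, densely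
defined (possibly unbounded) operator on `H`.  Suppose `(aₙ)` is a sequence of bounded
operators on `H` such that each `aₙ` has bounded commutator with `D` (with continuous
extension `Tₙ = [D, aₙ]`), `aₙ → a` in operator norm, and `Tₙ → T` in operator norm.
Then `a · dom D ⊆ dom D` and `D (a ξ) - a (D ξ) = T ξ` for every `ξ ∈ dom D`; in other
words the derivation `a ↦ [D, a]` is closed. -/
theorem closedness_of_commutator_derivation
    {H : Type*} [NormedAddCommGroup H] [InnerProductSpace ℂ H] [CompleteSpace H]
    (D : H →ₗ.[ℂ] H) (hdense : Dense (D.domain : Set H)) (hsa : IsSelfAdjoint D)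
    (aseq Tseq : ℕ → H →L[ℂ] H) (a T : H →L[ℂ] H)
    (hmap : ∀ n, ∀ ξ ∈ D.domain, aseq n ξ ∈ D.domain)
    (hcomm : ∀ n, ∀ ξ, ∀ hξ : ξ ∈ D.domain,
      D ⟨aseq n ξ, hmap n ξ hξ⟩ - aseq n (D ⟨ξ, hξ⟩) = Tseq n ξ)
    (ha : Tendsto aseq atTop (𝓝 a))
    (hT : Tendsto Tseq atTop (𝓝 T)) :
    ∀ ξ, ∀ hξ : ξ ∈ D.domain, ∃ hξ' : a ξ ∈ D.domain,
      D ⟨a ξ, hξ'⟩ - a (D ⟨ξ, hξ⟩) = T ξ :=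
  closedness_of_commutator_derivation_general D hsa aseq Tseq a T hmap hcomm ha hT
end

section
/- Let E be a Banach space, 𝔈 ⊆ E a dense subspace and ∇ : 𝔈 → E a closed linear operator (its graph is closed in E × E). Let (T_n) be a sequence of bounded linear operators on E with T_n(𝔈) ⊆ 𝔈 for every n, suppose T_n → T in operator norm for some bounded operator T on E, and suppose there is a bounded operator V on E such that sup{‖∇(T_n ξ) − T_n(∇ξ) − Vξ‖ : ξ ∈ 𝔈, ‖ξ‖ ≤ 1} → 0 as n → ∞. Then T(𝔈) ⊆ 𝔈 and ∇(Tξ) − T(∇ξ) = Vξ for all ξ ∈ 𝔈. In particular (taking T = 0), the derivation T ↦ ∇∘T − T∘∇, defined on the bounded operators preserving 𝔈, is closable, and its closure has domain exactly the bounded operators mapping 𝔈 into 𝔈 whose commutator with ∇ extends boundedly. -/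
open Filter Topology

/-- Let `E` be a Banach space, `𝔈 ⊆ E` a dense subspace and
`∇ : 𝔈 → E` a closed linear operator.  Let `(Tₙ)` be bounded operators on `E`
preserving `𝔈`, with `Tₙ → T` in operator norm, and suppose that for some bounded
operator `V` the commutators `∇∘Tₙ - Tₙ∘∇` converge to `V` uniformly on the unit ball
of `𝔈`.  Then `T(𝔈) ⊆ 𝔈` and `∇(Tξ) - T(∇ξ) = Vξ` for all `ξ ∈ 𝔈`; in particular
the derivation `T ↦ ∇∘T - T∘∇` is closable. -/
theorem closedness_of_connexion_derivation
    {E : Type*} [NormedAddCommGroup E] [NormedSpace ℂ E] [CompleteSpace E]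
    (Nab : E →ₗ.[ℂ] E) (hdense : Dense (Nab.domain : Set E)) (hclosed : Nab.IsClosed)
    (Tseq : ℕ → E →L[ℂ] E) (T V : E →L[ℂ] E)
    (hmap : ∀ n, ∀ ξ ∈ Nab.domain, Tseq n ξ ∈ Nab.domain)
    (hT : Tendsto Tseq atTop (𝓝 T))
    (hV : ∀ ε > (0 : ℝ), ∃ N, ∀ n ≥ N, ∀ ξ, ∀ hξ : ξ ∈ Nab.domain, ‖ξ‖ ≤ 1 →
      ‖Nab ⟨Tseq n ξ, hmap n ξ hξ⟩ - Tseq n (Nab ⟨ξ, hξ⟩) - V ξ‖ ≤ ε) :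
    ∀ ξ, ∀ hξ : ξ ∈ Nab.domain, ∃ hξ' : T ξ ∈ Nab.domain,
      Nab ⟨T ξ, hξ'⟩ - T (Nab ⟨ξ, hξ⟩) = V ξ := by
  intro ξ hξ
  -- pointwise convergence of `Tₙ`
  have htend1 : Tendsto (fun n => Tseq n ξ) atTop (𝓝 (T ξ)) :=
    ((ContinuousLinearMap.apply ℂ E ξ).continuous.tendsto T).comp hT
  have htend2 : Tendsto (fun n => Tseq n (Nab ⟨ξ, hξ⟩)) atTop (𝓝 (T (Nab ⟨ξ, hξ⟩))) :=
    ((ContinuousLinearMap.apply ℂ E (Nab ⟨ξ, hξ⟩)).continuous.tendsto T).comp hT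
  -- the scaled uniform bound
  have hbound : ∀ ε > (0 : ℝ), ∃ N, ∀ n ≥ N,
      ‖Nab ⟨Tseq n ξ, hmap n ξ hξ⟩ - Tseq n (Nab ⟨ξ, hξ⟩) - V ξ‖ ≤ ε * ‖ξ‖ := by
    intro ε hε
    obtain ⟨N, hN⟩ := hV ε hε
    refine ⟨N, fun n hn => ?_⟩
    by_cases h0 : ξ = 0
    · subst h0
      have hz : (⟨Tseq n 0, hmap n 0 hξ⟩ : Nab.domain) = 0 := Subtype.ext (by simp)
      have hz' : (⟨(0 : E), hξ⟩ : Nab.domain) = 0 := Subtype.ext rfl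
      rw [hz, hz']
      simp
    · have hc0 : (‖ξ‖ : ℝ) ≠ 0 := norm_ne_zero_iff.mpr h0
      set c : ℂ := (‖ξ‖ : ℂ) with hc
      have hcne : c ≠ 0 := by
        simp [hc, hc0]
      set η : E := c⁻¹ • ξ with hηdef
      have hη : η ∈ Nab.domain := Nab.domain.smul_mem _ hξ
      have hξeq : ξ = c • η := by
        rw [hηdef, smul_smul, mul_inv_cancel₀ hcne, one_smul]
      have hnormc : ‖c‖ = ‖ξ‖ := by
        simp [hc]
      have hηnorm : ‖η‖ ≤ 1 := by
        rw [hηdef, norm_smul, norm_inv, hnormc, inv_mul_cancel₀ hc0]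
      have key := hN n hn η hη hηnorm
      -- domain equalities
      have e1 : (⟨Tseq n ξ, hmap n ξ hξ⟩ : Nab.domain)
          = c • ⟨Tseq n η, hmap n η hη⟩ := Subtype.ext (by
        simp [hξeq, map_smul])
      have e2 : (⟨ξ, hξ⟩ : Nab.domain) = c • ⟨η, hη⟩ := Subtype.ext (by
        simpa using hξeq)
      have e3 : V ξ = c • V η := by rw [hξeq, map_smul]
      have e4 : Nab ⟨Tseq n ξ, hmap n ξ hξ⟩ - Tseq n (Nab ⟨ξ, hξ⟩) - V ξ
          = c • (Nab ⟨Tseq n η, hmap n η hη⟩ - Tseq n (Nab ⟨η, hη⟩) - V η) := by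
        rw [e1, e2, e3, Nab.map_smul, Nab.map_smul]
        simp [smul_sub]
      rw [e4, norm_smul, hnormc, mul_comm]
      exact mul_le_mul_of_nonneg_right key (norm_nonneg ξ)
  -- convergence of the commutator expression to 0
  have htend0 : Tendsto
      (fun n => Nab ⟨Tseq n ξ, hmap n ξ hξ⟩ - Tseq n (Nab ⟨ξ, hξ⟩) - V ξ)
      atTop (𝓝 0) := by
    rw [NormedAddCommGroup.tendsto_nhds_zero]
    intro ε hε
    obtain ⟨N, hN⟩ := hbound (ε / (2 * (‖ξ‖ + 1)))
      (by positivity)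
    refine eventually_atTop.mpr ⟨N, fun n hn => ?_⟩
    calc ‖Nab ⟨Tseq n ξ, hmap n ξ hξ⟩ - Tseq n (Nab ⟨ξ, hξ⟩) - V ξ‖
        ≤ ε / (2 * (‖ξ‖ + 1)) * ‖ξ‖ := hN n hn
      _ < ε := by
          rw [div_mul_eq_mul_div, div_lt_iff₀ (by positivity)]
          nlinarith [norm_nonneg ξ]
  -- convergence of `∇(Tₙ ξ)`
  have htend3 : Tendsto (fun n => Nab ⟨Tseq n ξ, hmap n ξ hξ⟩)
      atTop (𝓝 (T (Nab ⟨ξ, hξ⟩) + V ξ)) := by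
    have ha := htend0.add htend2
    have hb := ha.add
      (tendsto_const_nhds : Tendsto (fun _ : ℕ => V ξ) atTop (𝓝 (V ξ)))
    rw [zero_add] at hb
    refine hb.congr fun n => ?_
    abel
  -- the limit point lies on the closed graph
  have hmemgraph : (T ξ, T (Nab ⟨ξ, hξ⟩) + V ξ) ∈ Nab.graph := by
    refine hclosed.mem_of_tendsto (htend1.prodMk_nhds htend3)
      (Eventually.of_forall fun n => ?_)
    exact Nab.mem_graph ⟨Tseq n ξ, hmap n ξ hξ⟩
  rw [LinearPMap.mem_graph_iff] at hmemgraph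
  obtain ⟨y, hy1, hy2⟩ := hmemgraph
  have hy1' : (y : E) = T ξ := hy1
  have hy2' : Nab y = T (Nab ⟨ξ, hξ⟩) + V ξ := hy2
  have hξ' : T ξ ∈ Nab.domain := hy1' ▸ y.2
  refine ⟨hξ', ?_⟩
  have : (⟨T ξ, hξ'⟩ : Nab.domain) = y := Subtype.ext hy1'.symm
  rw [this, hy2', add_sub_cancel_left]
end

section
/- Let A be a unital C*-algebra and E a Hilbert C*-module over A with A-valued inner product ⟪·,·⟫ and right action ξ·a. Suppose (ζ_j)_{j=1}^m is a finite frame for E. Define the matrix P ∈ M_m(A) by P_{jk} := ⟪ζ_j, ζ_k⟫, and the maps Φ : E → Aᵐ, Φ(ξ) := (⟪ζ_j, ξ⟫)_{j=1}^m, and Ψ : Aᵐ → E, Ψ((a_j)_j) := ∑_{j=1}^m ζ_j·a_j. Then: (i) P is self-adjoint, i.e. (P_{jk})* = P_{kj} for all j, k; (ii) P is idempotent, i.e. ∑_{k=1}^m ⟪ζ_j, ζ_k⟫⟪ζ_k, ζ_l⟫ = ⟪ζ_j, ζ_l⟫ for all j, l; (iii) Ψ(Φ(ξ)) = ξ for all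 ξ ∈ E, and Φ(Ψ(a)) = P·a for all a ∈ Aᵐ (matrix-vector multiplication); (iv) if a, b ∈ Aᵐ satisfy P·a = a and P·b = b, then ⟪Ψ(a), Ψ(b)⟫ = ∑_{j=1}^m a_j* b_j. -/
open scoped RightActions

/-- The Hilbert C⋆-module class of the older Mathlib (right `Aᵐᵒᵖ`-action), whose name
`CStarModule` now denotes a left-module variant. -/
class RightCStarModule (A : outParam Type*) (E : Type*) [NonUnitalSemiring A] [StarRing A]
    [Module ℂ A] [AddCommGroup E] [Module ℂ E] [PartialOrder A] [SMul Aᵐᵒᵖ E] [Norm A] [Norm E]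
    extends Inner A E where
  inner_add_right {x} {y} {z} : inner x (y + z) = inner x y + inner x z
  inner_self_nonneg {x} : 0 ≤ inner x x
  inner_self {x} : inner x x = 0 ↔ x = 0
  inner_op_smul_right {a : A} {x y : E} : inner x (y <• a) = inner x y * a
  inner_smul_right_complex {z : ℂ} {x} {y} : inner x (z • y) = z • inner x y
  star_inner x y : star (inner x y) = inner y x
  norm_eq_sqrt_norm_inner_self x : ‖x‖ = Real.sqrt ‖inner x x‖

/-! `Φ ∘ Ψ` is multiplication by the Gram matrix `P` of the frame, since
`⟪ζⱼ, ∑ₖ ζₖ·aₖ⟫ = ∑ₖ ⟪ζⱼ, ζₖ⟫ aₖ`. Applied to the `l`-th column `Φ(ζₗ)` of `P` and combined with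
`Ψ ∘ Φ = id`, this gives `P² = P`; and when `P·b = b`,
`⟪Ψ(a), Ψ(b)⟫ = ∑ⱼ aⱼ⋆ ⟪ζⱼ, Ψ(b)⟫ = ∑ⱼ aⱼ⋆ (P·b)ⱼ = ∑ⱼ aⱼ⋆ bⱼ`. -/

open scoped Matrix

namespace RightCStarModule

variable {A E : Type*} [NonUnitalSemiring A] [StarRing A] [Module ℂ A] [AddCommGroup E]
  [Module ℂ E] [PartialOrder A] [SMul Aᵐᵒᵖ E] [Norm A] [Norm E] [RightCStarModule A E]
  {ι : Type*}

variable (A) in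
def innerRightAddMonoidHom (x : E) : E →+ A where
  toFun := inner A x
  -- `A` need not be cancellative, so `⟪x, 0⟫ = 0` comes from complex homogeneity
  map_zero' := by
    rw [← zero_smul ℂ (0 : E), inner_smul_right_complex, zero_smul]
  map_add' _ _ := inner_add_right

theorem inner_sum_right (s : Finset ι) (x : E) (f : ι → E) :
    inner A x (∑ i ∈ s, f i) = ∑ i ∈ s, inner A x (f i) :=
  map_sum (innerRightAddMonoidHom A x) f s

theorem inner_sum_left (s : Finset ι) (x : E) (f : ι → E) :
    inner A (∑ i ∈ s, f i) x = ∑ i ∈ s, inner A (f i) x := by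
  rw [← star_inner x, inner_sum_right, star_sum]
  simp only [star_inner]

theorem inner_op_smul_left (a : A) (x y : E) : inner A (x <• a) y = star a * inner A x y := by
  rw [← star_inner y, inner_op_smul_right, star_mul, star_inner]

variable (A) in
def gram (ζ : ι → E) : Matrix ι ι A :=
  Matrix.of fun j k => inner A (ζ j) (ζ k)

theorem gram_mulVec_apply [Fintype ι] (ζ : ι → E) (a : ι → A) (j : ι) :
    (gram A ζ *ᵥ a) j = inner A (ζ j) (∑ k, ζ k <• a k) := by
  simp only [gram, Matrix.mulVec, dotProduct, Matrix.of_apply, inner_sum_right,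
    inner_op_smul_right]

theorem gram_conjTranspose (ζ : ι → E) : (gram A ζ)ᴴ = gram A ζ :=
  Matrix.ext fun j k => star_inner (ζ k) (ζ j)

theorem gram_mul_gram_of_frame [Fintype ι] (ζ : ι → E)
    (hframe : ∀ ξ : E, ∑ j, ζ j <• inner A (ζ j) ξ = ξ) :
    gram A ζ * gram A ζ = gram A ζ := by
  ext j l
  calc (gram A ζ * gram A ζ) j l = (gram A ζ *ᵥ fun k => inner A (ζ k) (ζ l)) j := rfl
    _ = inner A (ζ j) (ζ l) := by rw [gram_mulVec_apply, hframe]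

theorem inner_sum_op_smul_of_gram_mulVec_eq [Fintype ι] (ζ : ι → E) (a : ι → A) {b : ι → A}
    (hb : gram A ζ *ᵥ b = b) :
    inner A (∑ j, ζ j <• a j) (∑ k, ζ k <• b k) = ∑ j, star (a j) * b j := by
  simp only [inner_sum_left, inner_op_smul_left]
  refine Finset.sum_congr rfl fun j _ => ?_
  rw [← gram_mulVec_apply, hb]

end RightCStarModule

open RightCStarModule in
theorem frame_projection_properties_general
    {A E : Type*} [CStarAlgebra A] [PartialOrder A]
    [NormedAddCommGroup E] [Module ℂ E] [Module Aᵐᵒᵖ E] [RightCStarModule A E]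
    {m : ℕ} (ζ : Fin m → E)
    (hframe : ∀ ξ : E, ∑ j, ζ j <• (inner A (ζ j) ξ : A) = ξ) :
    -- (i) `P` is self-adjoint
    (∀ j k, star (inner A (ζ j) (ζ k) : A) = inner A (ζ k) (ζ j)) ∧
    -- (ii) `P` is idempotent
    (∀ j l, ∑ k, (inner A (ζ j) (ζ k) : A) * (inner A (ζ k) (ζ l) : A)
      = (inner A (ζ j) (ζ l) : A)) ∧
    -- (iii) `Ψ ∘ Φ = id` and `Φ ∘ Ψ = P ·`
    (∀ ξ : E, ∑ j, ζ j <• (inner A (ζ j) ξ : A) = ξ) ∧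
    (∀ (a : Fin m → A) (j : Fin m),
      (inner A (ζ j) (∑ k, ζ k <• a k) : A)
        = (Matrix.of fun j k => (inner A (ζ j) (ζ k) : A)).mulVec a j) ∧
    -- (iv) the inner product on `P·Aᵐ` induced by `Ψ` is the standard one
    (∀ a b : Fin m → A,
      (Matrix.of fun j k => (inner A (ζ j) (ζ k) : A)).mulVec a = a →
      (Matrix.of fun j k => (inner A (ζ j) (ζ k) : A)).mulVec b = b →
      (inner A (∑ j, ζ j <• a j) (∑ j, ζ j <• b j) : A) = ∑ j, star (a j) * b j) := by
  refine ⟨fun j k => ?_, fun j l => ?_, hframe, fun a j => (gram_mulVec_apply ζ a j).symm,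
    fun a b _ hb => inner_sum_op_smul_of_gram_mulVec_eq ζ a hb⟩
  · exact congrFun (congrFun (gram_conjTranspose (A := A) ζ) k) j
  · exact congrFun (congrFun (gram_mul_gram_of_frame ζ hframe) j) l

/-- Let `A` be a unital C⋆-algebra and `E` a Hilbert C⋆-module over `A`
with a finite frame `(ζⱼ)ⱼ`.  With `P = (⟪ζⱼ, ζₖ⟫)` ∈ `Mₘ(A)`, `Φ(ξ) = (⟪ζⱼ, ξ⟫)ⱼ` and
`Ψ((aⱼ)ⱼ) = ∑ ζⱼ·aⱼ` we have: (i) `P` is self-adjoint; (ii) `P` is idempotent;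
(iii) `Ψ∘Φ = id` and `Φ∘Ψ = P·`; (iv) if `P·a = a` and `P·b = b` then
`⟪Ψ(a), Ψ(b)⟫ = ∑ aⱼ⋆ bⱼ`. -/
theorem frame_projection_properties
    {A E : Type*} [CStarAlgebra A] [PartialOrder A] [StarOrderedRing A]
    [NormedAddCommGroup E] [Module ℂ E] [Module Aᵐᵒᵖ E] [RightCStarModule A E] [CompleteSpace E]
    {m : ℕ} (ζ : Fin m → E)
    (hframe : ∀ ξ : E, ∑ j, ζ j <• (inner A (ζ j) ξ : A) = ξ) :
    -- (i) `P` is self-adjoint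
    (∀ j k, star (inner A (ζ j) (ζ k) : A) = inner A (ζ k) (ζ j)) ∧
    -- (ii) `P` is idempotent
    (∀ j l, ∑ k, (inner A (ζ j) (ζ k) : A) * (inner A (ζ k) (ζ l) : A)
      = (inner A (ζ j) (ζ l) : A)) ∧
    -- (iii) `Ψ ∘ Φ = id` and `Φ ∘ Ψ = P ·`
    (∀ ξ : E, ∑ j, ζ j <• (inner A (ζ j) ξ : A) = ξ) ∧
    (∀ (a : Fin m → A) (j : Fin m),
      (inner A (ζ j) (∑ k, ζ k <• a k) : A)
        = (Matrix.of fun j k => (inner A (ζ j) (ζ k) : A)).mulVec a j) ∧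
    -- (iv) the inner product on `P·Aᵐ` induced by `Ψ` is the standard one
    (∀ a b : Fin m → A,
      (Matrix.of fun j k => (inner A (ζ j) (ζ k) : A)).mulVec a = a →
      (Matrix.of fun j k => (inner A (ζ j) (ζ k) : A)).mulVec b = b →
      (inner A (∑ j, ζ j <• a j) (∑ j, ζ j <• b j) : A) = ∑ j, star (a j) * b j) :=
  frame_projection_properties_general ζ hframe
end

section
/- Let B be a C*-algebra and X a Hilbert C*-module over B. Suppose (X_k)_{k∈ℤ} is a family of closed submodules of X such that ⟪x, y⟫ = 0 whenever x ∈ X_k, y ∈ X_l with k ≠ l, and the algebraic span of ⋃_k X_k is dense in X. Suppose each X_k admits a finite frame (ξ^{(k)}_j)_{j=1}^{m_k} of elements of X_k, i.e. ∑_{j=1}^{m_k} ξ^{(k)}_j·⟪ξ^{(k)}_j, x⟫ = x for all x ∈ X_k. Define T_N(x) := ∑_{|k| ≤ N} ∑_{j=1}^{m_k} ξ^{(k)}_j·⟪ξ^{(k)}_j, x⟫ for x ∈ X. Then ‖T_N(x)‖ ≤ ‖x‖ for all N and all x ∈ X, and T_N(x) → x as N → ∞ for every x ∈ X; in other words, the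 concatenation of the frames of the X_k, ordered in blocks of increasing |k|, is a (countable) frame for X. -/
/-!
Each block operator `P k x = ∑ j, ξ k j <• ⟪ξ k j, x⟫` is self-adjoint, maps into `Xk k`, fixes
`Xk k` and kills `Xk l` for `l ≠ k`. Hence, for every finite set `s` of blocks,
`T = ∑_{k ∈ s} P k` satisfies `⟪T x, T x⟫ = ⟪x, T x⟫`, and Cauchy–Schwarz gives `‖T x‖ ≤ ‖x‖`.
On the span of the blocks `T x = x` as soon as `s` contains the finitely many blocks involved;
the uniform bound makes the set of `x` with `T x → x` (along all finite `s`) closed, and it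
contains the dense span, so it is everything.
-/

open Filter Topology
open scoped RightActions

/-- The December 2024 Mathlib `CStarModule` class (right `Aᵐᵒᵖ`-action, `⟪x, y <• a⟫ = ⟪x, y⟫ * a`),
restated verbatim because Mathlib's `CStarModule` now uses a left action `[SMul A E]`. -/
class OldCStarModule (A E : Type*) [NonUnitalSemiring A] [StarRing A]
    [Module ℂ A] [AddCommGroup E] [Module ℂ E] [PartialOrder A] [SMul Aᵐᵒᵖ E] [Norm A] [Norm E]
    extends Inner A E where
  inner_add_right {x} {y} {z} : inner x (y + z) = inner x y + inner x z
  inner_self_nonneg {x} : 0 ≤ inner x x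
  inner_self {x} : inner x x = 0 ↔ x = 0
  inner_op_smul_right {a : A} {x y : E} : inner x (y <• a) = inner x y * a
  inner_smul_right_complex {z : ℂ} {x} {y} : inner x (z • y) = z • inner x y
  star_inner x y : star (inner x y) = inner y x
  norm_eq_sqrt_norm_inner_self x : ‖x‖ = √‖inner x x‖

/-- A right Hilbert `A`-module is a left Hilbert `Aᵐᵒᵖ`-module for the inner product
`op ⟪x, y⟫`; under this dictionary `y <• ⟪x, y'⟫` is `⟪x, y'⟫_{Aᵐᵒᵖ} • y`. -/
instance OldCStarModule.toCStarModuleMulOpposite {A E : Type*} [NonUnitalCStarAlgebra A]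
    [PartialOrder A] [AddCommGroup E] [Module ℂ E] [SMul Aᵐᵒᵖ E] [Norm E] [OldCStarModule A E] :
    CStarModule Aᵐᵒᵖ E where
  inner x y := MulOpposite.op (inner A x y)
  inner_add_right := by simp [OldCStarModule.inner_add_right]
  inner_self_nonneg := MulOpposite.op_nonneg.mpr OldCStarModule.inner_self_nonneg
  inner_self := by simp [OldCStarModule.inner_self]
  inner_op_smul_right {a x y} := by
    rw [← a.op_unop, ← MulOpposite.op_mul]
    exact congrArg MulOpposite.op OldCStarModule.inner_op_smul_right
  inner_smul_right_complex := by simp [OldCStarModule.inner_smul_right_complex]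
  star_inner x y := by rw [← MulOpposite.op_star, OldCStarModule.star_inner]
  norm_eq_sqrt_norm_inner_self x := by
    rw [MulOpposite.norm_op, OldCStarModule.norm_eq_sqrt_norm_inner_self (A := A)]

theorem isClosed_setOf_hasSum_of_norm_sum_le {ι E : Type*} [NormedAddCommGroup E]
    {P : ι → E →+ E} {C : NNReal} (hP : ∀ (s : Finset ι) (x : E), ‖∑ k ∈ s, P k x‖ ≤ C * ‖x‖) :
    IsClosed {x | HasSum (fun k => P k x) x} := by
  have hLip (s : Finset ι) : LipschitzWith C fun x => ∑ k ∈ s, P k x :=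
    LipschitzWith.of_dist_le_mul fun x y => by
      simpa only [dist_eq_norm, map_sub, Finset.sum_sub_distrib] using hP s (x - y)
  exact (LipschitzWith.uniformEquicontinuous _ _ hLip).equicontinuous.isClosed_setOfPred_tendsto
    continuous_id

namespace CStarModule

variable {A E : Type*} [NonUnitalCStarAlgebra A] [PartialOrder A] [NormedAddCommGroup E]
  [Module ℂ E] [SMul A E] [CStarModule A E]

variable (A) in
lemma ext_inner_right {u v : E} (h : ∀ z, inner A z u = inner A z v) : u = v := by
  rw [← sub_eq_zero, ← inner_self (A := A), inner_sub_right, h, sub_self]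

protected lemma zero_smul (x : E) : (0 : A) • x = 0 :=
  ext_inner_right A fun z => by simp

protected lemma add_smul (a b : A) (x : E) : (a + b) • x = a • x + b • x :=
  ext_inner_right A fun z => by simp [add_mul]

variable (A) in
def frameOp {ι : Type*} [Fintype ι] (ξ : ι → E) : E →+ E where
  toFun x := ∑ j, inner A (ξ j) x • ξ j
  map_zero' := by simp [CStarModule.zero_smul]
  map_add' x y := by simp [CStarModule.add_smul, Finset.sum_add_distrib]

section frameOp

variable {ι : Type*} [Fintype ι] {ξ : ι → E}

lemma frameOp_apply (x : E) : frameOp A ξ x = ∑ j, inner A (ξ j) x • ξ j := rfl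

lemma inner_frameOp_left (x y : E) :
    inner A (frameOp A ξ x) y = inner A x (frameOp A ξ y) := by
  simp [frameOp_apply, inner_sum_left, inner_sum_right, inner_op_smul_left]

lemma frameOp_mem {S : AddSubmonoid E} (hS : ∀ (a : A), ∀ x ∈ S, a • x ∈ S)
    (hξ : ∀ j, ξ j ∈ S) (x : E) : frameOp A ξ x ∈ S :=
  S.sum_mem fun j _ => hS _ _ (hξ j)

lemma frameOp_eq_zero_of_inner_eq_zero {y : E} (hy : ∀ j, inner A (ξ j) y = 0) :
    frameOp A ξ y = 0 := by
  simp [frameOp_apply, hy, CStarModule.zero_smul]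

end frameOp

lemma norm_le_of_inner_self_eq_inner [StarOrderedRing A] {x y : E}
    (h : inner A y y = inner A x y) : ‖y‖ ≤ ‖x‖ := by
  rcases eq_or_ne y 0 with rfl | hy
  · simp
  refine le_of_mul_le_mul_right ?_ (norm_pos_iff.mpr hy)
  calc ‖y‖ * ‖y‖ = ‖inner A y y‖ := by rw [← sq, norm_sq_eq A]
    _ = ‖inner A x y‖ := by rw [h]
    _ ≤ ‖x‖ * ‖y‖ := norm_inner_le E

variable (A) in
structure IsOrthogonalFrameFamily {ι : Type*} (V : ι → Submodule ℂ E) {m : ι → Type*}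
    [∀ k, Fintype (m k)] (ξ : (k : ι) → m k → E) : Prop where
  smul_mem : ∀ k (a : A), ∀ x ∈ V k, a • x ∈ V k
  orthogonal : Pairwise fun k l => ∀ x ∈ V k, ∀ y ∈ V l, inner A x y = 0
  frame_mem : ∀ k j, ξ k j ∈ V k
  frameOp_eq_self : ∀ k, ∀ x ∈ V k, frameOp A (ξ k) x = x

namespace IsOrthogonalFrameFamily

variable {ι : Type*} {V : ι → Submodule ℂ E} {m : ι → Type*} [∀ k, Fintype (m k)]
  {ξ : (k : ι) → m k → E}

lemma frameOp_mem_self (h : IsOrthogonalFrameFamily A V ξ) (k : ι) (x : E) :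
    frameOp A (ξ k) x ∈ V k :=
  CStarModule.frameOp_mem (S := (V k).toAddSubmonoid) (h.smul_mem k) (h.frame_mem k) x

lemma frameOp_eq_zero_of_mem_of_ne (h : IsOrthogonalFrameFamily A V ξ) {k l : ι} (hkl : k ≠ l)
    {y : E} (hy : y ∈ V l) : frameOp A (ξ k) y = 0 :=
  frameOp_eq_zero_of_inner_eq_zero fun j => h.orthogonal hkl _ (h.frame_mem k j) _ hy

lemma frameOp_sum_frameOp [DecidableEq ι] (h : IsOrthogonalFrameFamily A V ξ) {s : Finset ι}
    {k : ι} (hk : k ∈ s) (x : E) :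
    frameOp A (ξ k) (∑ l ∈ s, frameOp A (ξ l) x) = frameOp A (ξ k) x := by
  rw [map_sum, Finset.sum_eq_single_of_mem k hk
    fun l _ hlk => h.frameOp_eq_zero_of_mem_of_ne (Ne.symm hlk) (h.frameOp_mem_self l x)]
  exact h.frameOp_eq_self k _ (h.frameOp_mem_self k x)

lemma hasSum_frameOp_of_mem (h : IsOrthogonalFrameFamily A V ξ) {k : ι} {y : E}
    (hy : y ∈ V k) : HasSum (fun l => frameOp A (ξ l) y) y := by
  classical
  simpa only [h.frameOp_eq_self k y hy] using
    hasSum_single k fun l hlk => h.frameOp_eq_zero_of_mem_of_ne hlk hy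

lemma hasSum_frameOp_of_mem_span (h : IsOrthogonalFrameFamily A V ξ) {y : E}
    (hy : y ∈ Submodule.span ℂ (⋃ k, (V k : Set E))) :
    HasSum (fun k => frameOp A (ξ k) y) y := by
  simp only [Submodule.span_iUnion, Submodule.span_eq] at hy
  induction hy using Submodule.iSup_induction' with
  | mem k y hy => exact h.hasSum_frameOp_of_mem hy
  | zero => simpa only [map_zero] using hasSum_zero
  | add y z _ _ hy hz => simpa only [map_add] using hy.add hz

variable [StarOrderedRing A]

lemma norm_sum_frameOp_le (h : IsOrthogonalFrameFamily A V ξ) (s : Finset ι) (x : E) :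
    ‖∑ k ∈ s, frameOp A (ξ k) x‖ ≤ ‖x‖ := by
  classical
  refine norm_le_of_inner_self_eq_inner (A := A) ?_
  simp only [inner_sum_left, inner_frameOp_left (A := A)]
  rw [inner_sum_right]
  exact Finset.sum_congr rfl fun k hk => by rw [h.frameOp_sum_frameOp hk]

lemma hasSum_frameOp (h : IsOrthogonalFrameFamily A V ξ)
    (hdense : Dense (Submodule.span ℂ (⋃ k, (V k : Set E)) : Set E)) (x : E) :
    HasSum (fun k => frameOp A (ξ k) x) x :=
  closure_minimal (fun _ => h.hasSum_frameOp_of_mem_span)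
    (isClosed_setOf_hasSum_of_norm_sum_le (C := 1) fun s x => by
      simpa only [NNReal.coe_one, one_mul] using h.norm_sum_frameOp_le s x) (hdense x)

end IsOrthogonalFrameFamily

end CStarModule

theorem frame_of_orthogonal_decomposition_general
    {B X : Type*} [CStarAlgebra B] [PartialOrder B] [StarOrderedRing B]
    [NormedAddCommGroup X] [Module ℂ X] [Module Bᵐᵒᵖ X] [OldCStarModule B X]
    (Xk : ℤ → Submodule ℂ X)
    (hsubmod : ∀ (k : ℤ) (b : B), ∀ x ∈ Xk k, x <• b ∈ Xk k)
    (horth : ∀ k l : ℤ, k ≠ l → ∀ x ∈ Xk k, ∀ y ∈ Xk l, (inner B x y : B) = 0)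
    (hdense : Dense ((Submodule.span ℂ (⋃ k : ℤ, (Xk k : Set X)) : Submodule ℂ X) : Set X))
    (m : ℤ → ℕ) (ξ : (k : ℤ) → Fin (m k) → X)
    (hmem : ∀ k j, ξ k j ∈ Xk k)
    (hframe : ∀ k : ℤ, ∀ x ∈ Xk k, ∑ j, ξ k j <• (inner B (ξ k j) x : B) = x) :
    (∀ (N : ℕ) (x : X),
      ‖∑ k ∈ Finset.Icc (-(N : ℤ)) (N : ℤ), ∑ j, ξ k j <• (inner B (ξ k j) x : B)‖ ≤ ‖x‖) ∧
    (∀ x : X,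
      Tendsto (fun N : ℕ =>
          ∑ k ∈ Finset.Icc (-(N : ℤ)) (N : ℤ), ∑ j, ξ k j <• (inner B (ξ k j) x : B))
        atTop (𝓝 x)) := by
  have hfamily : CStarModule.IsOrthogonalFrameFamily Bᵐᵒᵖ Xk ξ :=
    { smul_mem := fun k a x hx => hsubmod k a.unop x hx
      orthogonal := fun k l hkl x hx y hy => congrArg MulOpposite.op (horth k l hkl x hx y hy)
      frame_mem := hmem
      frameOp_eq_self := hframe }
  exact ⟨fun N => hfamily.norm_sum_frameOp_le _,
    fun x => (hfamily.hasSum_frameOp hdense x).comp Finset.tendsto_Icc_neg⟩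

/-- Let `X` be a Hilbert C⋆-module over a C⋆-algebra `B` and
`(X_k)_{k ∈ ℤ}` a family of mutually orthogonal closed submodules whose algebraic span
is dense in `X`.  If each `X_k` has a finite frame `(ξ^{(k)}_j)_j` of elements of `X_k`,
then the operators `T_N x = ∑_{|k| ≤ N} ∑_j ξ^{(k)}_j·⟪ξ^{(k)}_j, x⟫` satisfy
`‖T_N x‖ ≤ ‖x‖` and `T_N x → x` for every `x ∈ X`; i.e. the concatenation of the frames,
in blocks of increasing `|k|`, is a countable frame for `X`. -/
theorem frame_of_orthogonal_decomposition
    {B X : Type*} [CStarAlgebra B] [PartialOrder B] [StarOrderedRing B]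
    [NormedAddCommGroup X] [Module ℂ X] [Module Bᵐᵒᵖ X] [OldCStarModule B X] [CompleteSpace X]
    (Xk : ℤ → Submodule ℂ X)
    (hclosed : ∀ k, IsClosed (Xk k : Set X))
    (hsubmod : ∀ (k : ℤ) (b : B), ∀ x ∈ Xk k, x <• b ∈ Xk k)
    (horth : ∀ k l : ℤ, k ≠ l → ∀ x ∈ Xk k, ∀ y ∈ Xk l, (inner B x y : B) = 0)
    (hdense : Dense ((Submodule.span ℂ (⋃ k : ℤ, (Xk k : Set X)) : Submodule ℂ X) : Set X))
    (m : ℤ → ℕ) (ξ : (k : ℤ) → Fin (m k) → X)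
    (hmem : ∀ k j, ξ k j ∈ Xk k)
    (hframe : ∀ k : ℤ, ∀ x ∈ Xk k, ∑ j, ξ k j <• (inner B (ξ k j) x : B) = x) :
    (∀ (N : ℕ) (x : X),
      ‖∑ k ∈ Finset.Icc (-(N : ℤ)) (N : ℤ), ∑ j, ξ k j <• (inner B (ξ k j) x : B)‖ ≤ ‖x‖) ∧
    (∀ x : X,
      Tendsto (fun N : ℕ =>
          ∑ k ∈ Finset.Icc (-(N : ℤ)) (N : ℤ), ∑ j, ξ k j <• (inner B (ξ k j) x : B))
        atTop (𝓝 x)) :=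
  frame_of_orthogonal_decomposition_general Xk hsubmod horth hdense m ξ hmem hframe
end
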